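/- The quantity V(π/2) / (2π²), where V(π/2) = 2π ∫₀^{π/2} ∫_{−π/2}^{π/2} τ · sin(τ cos v) dv dτ, satisfies 0.6963 < V(π/2) / (2π²) < 0.6964. (This is the density δ(R₃, K₃) ≈ 0.69634983 of the multiply transitive packing with R₃ = π/2 and kernel point K = A₂ in equation (2.11) of the paper, the Dirichlet–Voronoi cell having volume 2π².) -/

import Mathlib

/-!
On `0 ≤ x`, `x² ≤ 6` the Taylor terms `x^(2i+1)/(2i+1)!` of `sin` decrease, so the partial sums
with an even (odd) number of terms bound `sin` from below (above); this covers the whole range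
`0 ≤ τ cos v ≤ π/2` of the integrand. Integrated termwise, `τ (τ cos v)^(2i+1)` contributes
`ρ^(2i+3)/(2i+3)` times the Wallis integral of `cos^(2i+1)`, so the double integral is squeezed
between explicit polynomials in `π`; four and five terms already separate `V(π/2)/(2π²)` from
0.6963 and 0.6964.
-/

open Real

/-- The volume of the geodesic ball of radius `ρ` in `S² × ℝ` geometry
(Theorem 2.4 of the paper). -/
noncomputable def ballVol (ρ : ℝ) : ℝ :=
  2 * π * ∫ τ in (0 : ℝ)..ρ, ∫ v in (-(π / 2))..(π / 2), τ * Real.sin (τ * Real.cos v)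

open intervalIntegral Finset Nat Set Filter Topology

noncomputable def ballIntegral (f : ℝ → ℝ) (ρ : ℝ) : ℝ :=
  ∫ τ in (0 : ℝ)..ρ, ∫ v in (-(π / 2))..(π / 2), τ * f (τ * cos v)

theorem ballVol_eq_ballIntegral (ρ : ℝ) : ballVol ρ = 2 * π * ballIntegral sin ρ := rfl

theorem continuous_ballInnerIntegral {f : ℝ → ℝ} (hf : Continuous f) :
    Continuous fun τ => ∫ v in (-(π / 2))..(π / 2), τ * f (τ * cos v) :=
  continuous_parametric_intervalIntegral_of_continuous' (by fun_prop) _ _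

theorem ballIntegral_mono {f g : ℝ → ℝ} (hf : Continuous f) (hg : Continuous g) {ρ : ℝ}
    (hρ : 0 ≤ ρ) (hfg : ∀ x ∈ Icc 0 ρ, f x ≤ g x) : ballIntegral f ρ ≤ ballIntegral g ρ := by
  refine integral_mono_on hρ ((continuous_ballInnerIntegral hf).intervalIntegrable _ _)
    ((continuous_ballInnerIntegral hg).intervalIntegrable _ _) fun τ hτ => ?_
  refine integral_mono_on (by linarith [pi_pos]) (Continuous.intervalIntegrable (by fun_prop) _ _)
    (Continuous.intervalIntegrable (by fun_prop) _ _) fun v hv => ?_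
  have hx : τ * cos v ∈ Icc 0 ρ :=
    ⟨mul_nonneg hτ.1 (cos_nonneg_of_mem_Icc hv),
      (mul_le_of_le_one_right hτ.1 (cos_le_one v)).trans hτ.2⟩
  exact mul_le_mul_of_nonneg_left (hfg _ hx) hτ.1

theorem ballIntegral_finsetSum {ι : Type*} (s : Finset ι) {f : ι → ℝ → ℝ}
    (hf : ∀ i ∈ s, Continuous (f i)) (ρ : ℝ) :
    ballIntegral (fun x => ∑ i ∈ s, f i x) ρ = ∑ i ∈ s, ballIntegral (f i) ρ := by
  unfold ballIntegral
  simp_rw [Finset.mul_sum]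
  rw [← integral_finsetSum fun i hi =>
    (continuous_ballInnerIntegral (hf i hi)).intervalIntegrable _ _]
  refine integral_congr fun τ _ => integral_finsetSum fun i hi => ?_
  exact Continuous.intervalIntegrable (by have := hf i hi; fun_prop) _ _

theorem ballIntegral_const_mul (c : ℝ) (f : ℝ → ℝ) (ρ : ℝ) :
    ballIntegral (fun x => c * f x) ρ = c * ballIntegral f ρ := by
  simp only [ballIntegral, mul_left_comm _ c, integral_const_mul]

theorem ballIntegral_pow (m : ℕ) (ρ : ℝ) :
    ballIntegral (· ^ m) ρ = ρ ^ (m + 2) / (m + 2) * ∫ v in (-(π / 2))..(π / 2), cos v ^ m := by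
  have h : ∀ τ v : ℝ, τ * (τ * cos v) ^ m = τ ^ (m + 1) * cos v ^ m := fun τ v => by ring
  simp only [ballIntegral, h, integral_const_mul, integral_mul_const, integral_pow]
  norm_num [add_assoc]

theorem integral_cos_pow_odd (n : ℕ) :
    ∫ v in (-(π / 2))..(π / 2), cos v ^ (2 * n + 1) =
      2 * ∏ i ∈ range n, (2 * (i : ℝ) + 2) / (2 * i + 3) := by
  have h := integral_comp_sub_right (fun x => cos x ^ (2 * n + 1)) (a := 0) (b := π) (π / 2)
  simp only [cos_sub_pi_div_two, integral_sin_pow_odd] at h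
  rwa [zero_sub, sub_half, eq_comm] at h

noncomputable def sinTaylor (n : ℕ) (x : ℝ) : ℝ :=
  ∑ i ∈ range n, (-1) ^ i * (x ^ (2 * i + 1) / (2 * i + 1)!)

theorem tendsto_sinTaylor (x : ℝ) : Tendsto (fun n => sinTaylor n x) atTop (𝓝 (sin x)) := by
  simpa only [sinTaylor, mul_div_assoc] using (hasSum_sin x).tendsto_sum_nat

theorem antitone_sin_taylor_term {x : ℝ} (hx : 0 ≤ x) (hx6 : x ^ 2 ≤ 6) :
    Antitone fun i : ℕ => x ^ (2 * i + 1) / (2 * i + 1)! := by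
  refine antitone_nat_of_succ_le fun i => ?_
  have hstep : (x ^ 2 / ((2 * i + 2) * (2 * i + 3)) : ℝ) ≤ 1 := by
    rw [div_le_one (by positivity)]
    nlinarith
  calc x ^ (2 * (i + 1) + 1) / ((2 * (i + 1) + 1)! : ℝ)
      = x ^ (2 * i + 1) / (2 * i + 1)! * (x ^ 2 / ((2 * i + 2) * (2 * i + 3))) := by
        rw [show 2 * (i + 1) + 1 = 2 * i + 1 + 1 + 1 by ring, factorial_succ, factorial_succ]
        push_cast
        field_simp
        ring
    _ ≤ x ^ (2 * i + 1) / (2 * i + 1)! := mul_le_of_le_one_right (by positivity) hstep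

theorem sinTaylor_even_le_sin {x : ℝ} (hx : 0 ≤ x) (hx6 : x ^ 2 ≤ 6) (k : ℕ) :
    sinTaylor (2 * k) x ≤ sin x :=
  (antitone_sin_taylor_term hx hx6).alternating_series_le_tendsto (tendsto_sinTaylor x) k

theorem sin_le_sinTaylor_odd {x : ℝ} (hx : 0 ≤ x) (hx6 : x ^ 2 ≤ 6) (k : ℕ) :
    sin x ≤ sinTaylor (2 * k + 1) x :=
  (antitone_sin_taylor_term hx hx6).tendsto_le_alternating_series (tendsto_sinTaylor x) k

theorem ballIntegral_sinTaylor (n : ℕ) (ρ : ℝ) :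
    ballIntegral (sinTaylor n) ρ = ∑ i ∈ range n, (-1 : ℝ) ^ i / (2 * i + 1)! *
      (ρ ^ (2 * i + 3) / (2 * i + 3) * (2 * ∏ j ∈ range i, (2 * (j : ℝ) + 2) / (2 * j + 3))) := by
  have hterm : ∀ i : ℕ, (fun x : ℝ => (-1) ^ i * (x ^ (2 * i + 1) / (2 * i + 1)!)) =
      fun x => (-1 : ℝ) ^ i / (2 * i + 1)! * x ^ (2 * i + 1) := fun i => by ext; ring
  unfold sinTaylor
  rw [ballIntegral_finsetSum _ fun i _ => by fun_prop]
  refine sum_congr rfl fun i _ => ?_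
  rw [hterm, ballIntegral_const_mul, ballIntegral_pow, integral_cos_pow_odd]
  push_cast
  ring

theorem ballIntegral_sinTaylor_even_le {ρ : ℝ} (hρ : 0 ≤ ρ) (hρ6 : ρ ^ 2 ≤ 6) (k : ℕ) :
    ballIntegral (sinTaylor (2 * k)) ρ ≤ ballIntegral sin ρ :=
  ballIntegral_mono (by fun_prop [sinTaylor]) continuous_sin hρ fun x hx =>
    sinTaylor_even_le_sin hx.1 ((pow_le_pow_left₀ hx.1 hx.2 2).trans hρ6) k

theorem ballIntegral_le_sinTaylor_odd {ρ : ℝ} (hρ : 0 ≤ ρ) (hρ6 : ρ ^ 2 ≤ 6) (k : ℕ) :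
    ballIntegral sin ρ ≤ ballIntegral (sinTaylor (2 * k + 1)) ρ :=
  ballIntegral_mono continuous_sin (by fun_prop [sinTaylor]) hρ fun x hx =>
    sin_le_sinTaylor_odd hx.1 ((pow_le_pow_left₀ hx.1 hx.2 2).trans hρ6) k

theorem ballIntegral_sinTaylor_four_pi_div_two_gt :
    0.6963 * π < ballIntegral (sinTaylor 4) (π / 2) := by
  rw [ballIntegral_sinTaylor]
  norm_num [sum_range_succ, prod_range_succ, factorial]
  have h1 : (3.141592 : ℝ) < π := pi_gt_d6
  have h2 : π < 3.141593 := pi_lt_d6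
  have h3 : (3.141592 : ℝ) ^ 3 < π ^ 3 := by gcongr
  have h5 : π ^ 5 < (3.141593 : ℝ) ^ 5 := by gcongr
  have h7 : (3.141592 : ℝ) ^ 7 < π ^ 7 := by gcongr
  have h9 : π ^ 9 < (3.141593 : ℝ) ^ 9 := by gcongr
  nlinarith

theorem ballIntegral_sinTaylor_five_pi_div_two_lt :
    ballIntegral (sinTaylor 5) (π / 2) < 0.6964 * π := by
  rw [ballIntegral_sinTaylor]
  norm_num [sum_range_succ, prod_range_succ, factorial]
  have h1 : (3.141592 : ℝ) < π := pi_gt_d6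
  have h2 : π < 3.141593 := pi_lt_d6
  have h3 : π ^ 3 < (3.141593 : ℝ) ^ 3 := by gcongr
  have h5 : (3.141592 : ℝ) ^ 5 < π ^ 5 := by gcongr
  have h7 : π ^ 7 < (3.141593 : ℝ) ^ 7 := by gcongr
  have h9 : (3.141592 : ℝ) ^ 9 < π ^ 9 := by gcongr
  have h11 : π ^ 11 < (3.141593 : ℝ) ^ 11 := by gcongr
  nlinarith

/-- The density `δ(R₃, K₃) ≈ 0.69634983` of the multiply transitive packing with
`R₃ = π/2` and kernel point `K = A₂` (equation (2.11)), the Dirichlet–Voronoi cell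
having volume `2π²`. -/
theorem density_R3_bounds :
    0.6963 < ballVol (π / 2) / (2 * π ^ 2) ∧ ballVol (π / 2) / (2 * π ^ 2) < 0.6964 := by
  have hπ := pi_pos
  have hρ : (π / 2) ^ 2 ≤ 6 := by nlinarith [pi_lt_four]
  have hlo := ballIntegral_sinTaylor_even_le (by positivity) hρ 2
  have hhi := ballIntegral_le_sinTaylor_odd (by positivity) hρ 2
  have hdensity : ballVol (π / 2) / (2 * π ^ 2) = ballIntegral sin (π / 2) / π := by
    rw [ballVol_eq_ballIntegral]
    field_simp
  rw [hdensity, lt_div_iff₀ hπ, div_lt_iff₀ hπ]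
  exact ⟨ballIntegral_sinTaylor_four_pi_div_two_gt.trans_le hlo,
    hhi.trans_lt ballIntegral_sinTaylor_five_pi_div_two_lt⟩
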